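/- arXiv:1707.09325 — 2 statements merged into one kernel-verified Lean document; each statement's English description precedes it below -/
import Mathlib

section
/- Let V be an oriented 4-dimensional real inner product space with hyperKähler data: orthogonal complex structures J₁, J₂, J₃ satisfying the quaternion relations and 2-forms ω₁, ω₂, ω₃ with g(u,v) = ω_k(J_k u, v). Let f¹,...,f⁴ be an oriented orthonormal basis of V*. Define the linear map A : V* ⊗ Λ³V* → Λ⁴V* by A(γ ⊗ η) = γ ∧ η, and the linear map B : S²V* ⊗ ℝ³ → V* ⊗ Λ³V* which sends a symmetric tensor h = Σ h_{pq} fᵖfᵠ tensored with the k-th standard basis vector e_k to B(h ⊗ e_k) = Σ h_{pq}[fᵖ ⊗ (fᵠ ∧ ω_k) + fᵠ ⊗ (fᵖ ∧ ω_k)]. Then the image of B equals the kernel of A. -/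
set_option maxHeartbeats 1000000
set_option synthInstance.maxHeartbeats 200000

open TensorProduct

/-- `V = ℝ⁴`, identified with its dual `V*` via the standard basis. -/
abbrev V4 : Type := Fin 4 → ℝ

/-- The standard basis of `V4` (equally, the dual basis `f¹,…,f⁴` of `V*`). -/
def e4 (i : Fin 4) : V4 := Pi.single i 1

/-- The wedge `a ∧ b ∧ c` of three (co)vectors, as an element of `Λ³V*`. -/
noncomputable def wedge3 (a b c : V4) : ⋀[ℝ]^3 V4 :=
  ⟨ExteriorAlgebra.ιMulti ℝ 3 ![a, b, c],
    ExteriorAlgebra.ιMulti_range ℝ 3 (Set.mem_range_self _)⟩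

/-- The wedge `a ∧ b ∧ c ∧ d` of four (co)vectors, as an element of `Λ⁴V*`. -/
noncomputable def wedge4 (a b c d : V4) : ⋀[ℝ]^4 V4 :=
  ⟨ExteriorAlgebra.ιMulti ℝ 4 ![a, b, c, d],
    ExteriorAlgebra.ιMulti_range ℝ 4 (Set.mem_range_self _)⟩

/-- `w ∧ ω_k ∈ Λ³V*`, for the standard hyperKähler forms `ω₁ = f¹∧f²+f³∧f⁴`,
`ω₂ = f¹∧f³+f⁴∧f²`, `ω₃ = f¹∧f⁴+f²∧f³`. -/
noncomputable def omegaWedge : Fin 3 → V4 → ⋀[ℝ]^3 V4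
  | 0, w => wedge3 w (e4 0) (e4 1) + wedge3 w (e4 2) (e4 3)
  | 1, w => wedge3 w (e4 0) (e4 2) + wedge3 w (e4 3) (e4 1)
  | 2, w => wedge3 w (e4 0) (e4 3) + wedge3 w (e4 1) (e4 2)

/-! ### Auxiliary lemmas -/

lemma omegaW0 (w : V4) : omegaWedge 0 w = wedge3 w (e4 0) (e4 1) + wedge3 w (e4 2) (e4 3) := rfl
lemma omegaW1 (w : V4) : omegaWedge 1 w = wedge3 w (e4 0) (e4 2) + wedge3 w (e4 3) (e4 1) := rfl
lemma omegaW2 (w : V4) : omegaWedge 2 w = wedge3 w (e4 0) (e4 3) + wedge3 w (e4 1) (e4 2) := rfl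

lemma wedge3_swap01 (a b c : V4) : wedge3 b a c = - wedge3 a b c := by
  apply Subtype.ext
  have h : ![a,b,c] ∘ Equiv.swap 0 1 = ![b,a,c] := by
    funext i; fin_cases i <;> simp [Equiv.swap_apply_of_ne_of_ne]
  simp only [wedge3, ← h, NegMemClass.coe_neg]
  exact AlternatingMap.map_swap _ _ (by decide)

lemma wedge3_swap12 (a b c : V4) : wedge3 a c b = - wedge3 a b c := by
  apply Subtype.ext
  have h : ![a,b,c] ∘ Equiv.swap 1 2 = ![a,c,b] := by
    funext i; fin_cases i <;> simp [Equiv.swap_apply_of_ne_of_ne]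
  simp only [wedge3, ← h, NegMemClass.coe_neg]
  exact AlternatingMap.map_swap _ _ (by decide)

lemma wedge3_same01 (a c : V4) : wedge3 a a c = 0 := by
  apply Subtype.ext
  exact AlternatingMap.map_eq_zero_of_eq _ _ (i := 0) (j := 1) rfl (by decide)
lemma wedge3_same02 (a b : V4) : wedge3 a b a = 0 := by
  apply Subtype.ext
  exact AlternatingMap.map_eq_zero_of_eq _ _ (i := 0) (j := 2) rfl (by decide)
lemma wedge3_same12 (a b : V4) : wedge3 a b b = 0 := by
  apply Subtype.ext
  exact AlternatingMap.map_eq_zero_of_eq _ _ (i := 1) (j := 2) rfl (by decide)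

/-- 12 concrete sorting lemmas for first-two-argument swaps. -/
lemma w3a10 (c : V4) : wedge3 (e4 1) (e4 0) c = -wedge3 (e4 0) (e4 1) c := wedge3_swap01 _ _ _
lemma w3a20 (c : V4) : wedge3 (e4 2) (e4 0) c = -wedge3 (e4 0) (e4 2) c := wedge3_swap01 _ _ _
lemma w3a30 (c : V4) : wedge3 (e4 3) (e4 0) c = -wedge3 (e4 0) (e4 3) c := wedge3_swap01 _ _ _
lemma w3a21 (c : V4) : wedge3 (e4 2) (e4 1) c = -wedge3 (e4 1) (e4 2) c := wedge3_swap01 _ _ _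
lemma w3a31 (c : V4) : wedge3 (e4 3) (e4 1) c = -wedge3 (e4 1) (e4 3) c := wedge3_swap01 _ _ _
lemma w3a32 (c : V4) : wedge3 (e4 3) (e4 2) c = -wedge3 (e4 2) (e4 3) c := wedge3_swap01 _ _ _
lemma w3b10 (a : V4) : wedge3 a (e4 1) (e4 0) = -wedge3 a (e4 0) (e4 1) := wedge3_swap12 _ _ _
lemma w3b20 (a : V4) : wedge3 a (e4 2) (e4 0) = -wedge3 a (e4 0) (e4 2) := wedge3_swap12 _ _ _
lemma w3b30 (a : V4) : wedge3 a (e4 3) (e4 0) = -wedge3 a (e4 0) (e4 3) := wedge3_swap12 _ _ _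
lemma w3b21 (a : V4) : wedge3 a (e4 2) (e4 1) = -wedge3 a (e4 1) (e4 2) := wedge3_swap12 _ _ _
lemma w3b31 (a : V4) : wedge3 a (e4 3) (e4 1) = -wedge3 a (e4 1) (e4 3) := wedge3_swap12 _ _ _
lemma w3b32 (a : V4) : wedge3 a (e4 3) (e4 2) = -wedge3 a (e4 2) (e4 3) := wedge3_swap12 _ _ _

lemma v4_eq_sum (x : V4) : x = ∑ j, x j • e4 j := by
  funext k
  simp [e4, Pi.single_apply, Finset.sum_apply]

lemma wedge3_expand (a b c : V4) :
    wedge3 a b c = ∑ r : Fin 3 → Fin 4,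
      (∏ i, (![a,b,c]) i (r i)) • wedge3 (e4 (r 0)) (e4 (r 1)) (e4 (r 2)) := by
  apply Subtype.ext
  set F := (ExteriorAlgebra.ιMulti ℝ 3 (M := V4)).toMultilinearMap with hF
  have h0 : ((wedge3 a b c : ⋀[ℝ]^3 V4) : ExteriorAlgebra ℝ V4)
      = F (fun i => ∑ j, (![a,b,c]) i j • e4 j) := by
    show F ![a,b,c] = _
    exact congrArg F (funext fun i => v4_eq_sum _)
  rw [h0, F.map_sum]
  push_cast [AddSubmonoidClass.coe_finset_sum]
  refine Finset.sum_congr rfl fun r _ => ?_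
  rw [F.map_smul_univ]
  show _ • F _ = _ • F ![e4 (r 0), e4 (r 1), e4 (r 2)]
  refine congrArg _ (congrArg F (funext fun i => ?_))
  fin_cases i <;> rfl

lemma wedge4_swap01 (a b c d : V4) : wedge4 b a c d = - wedge4 a b c d := by
  apply Subtype.ext
  have h : ![a,b,c,d] ∘ Equiv.swap 0 1 = ![b,a,c,d] := by
    funext i; fin_cases i <;> simp [Equiv.swap_apply_of_ne_of_ne]
  simp only [wedge4, ← h, NegMemClass.coe_neg]
  exact AlternatingMap.map_swap _ _ (by decide)

lemma wedge4_ne : wedge4 (e4 0) (e4 1) (e4 2) (e4 3) ≠ 0 := by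
  intro h
  have h' : (ExteriorAlgebra.ιMulti ℝ 4) ![e4 0, e4 1, e4 2, e4 3] = 0 := congrArg Subtype.val h
  have := congrArg (ExteriorAlgebra.liftAlternating
    (fun i => match i with
      | 4 => (Pi.basisFun ℝ (Fin 4)).det
      | _ => 0)) h'
  rw [ExteriorAlgebra.liftAlternating_apply_ιMulti, map_zero] at this
  have h2 : ![e4 0, e4 1, e4 2, e4 3] = ⇑(Pi.basisFun ℝ (Fin 4)) := by
    funext i; fin_cases i <;> simp [e4, Pi.basisFun_apply]
  rw [h2] at this
  have this2 : (Pi.basisFun ℝ (Fin 4)).det ⇑(Pi.basisFun ℝ (Fin 4)) = 0 := this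
  rw [Module.Basis.det_self] at this2
  exact one_ne_zero this2

lemma wedge3_span :
    Submodule.span ℝ {x : ⋀[ℝ]^3 V4 | ∃ a b c, wedge3 a b c = x} = ⊤ := by
  apply Submodule.map_injective_of_injective (⋀[ℝ]^3 V4).injective_subtype
  rw [Submodule.map_span, Submodule.map_top, Submodule.range_subtype]
  conv_rhs => rw [← ExteriorAlgebra.ιMulti_span_fixedDegree]
  congr 1
  ext x
  constructor
  · rintro ⟨y, ⟨a, b, c, rfl⟩, rfl⟩
    exact ⟨![a,b,c], rfl⟩
  · rintro ⟨v, rfl⟩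
    refine ⟨wedge3 (v 0) (v 1) (v 2), ⟨_, _, _, rfl⟩, ?_⟩
    show ExteriorAlgebra.ιMulti ℝ 3 ![v 0, v 1, v 2] = _
    exact congrArg _ (funext fun i => by fin_cases i <;> rfl)

/-- For the oriented 4-dimensional inner product space `V = ℝ⁴` with its
standard hyperKähler structure, let `A : V* ⊗ Λ³V* → Λ⁴V*` be the wedge map
`A(γ ⊗ η) = γ ∧ η`, and let `B : S²V* ⊗ ℝ³ → V* ⊗ Λ³V*` send
`Σ h_{pq} fᵖfᵠ ⊗ e_k ↦ Σ h_{pq}[fᵖ ⊗ (fᵠ ∧ ω_k) + fᵠ ⊗ (fᵖ ∧ ω_k)]`.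
Then the image of `B` equals the kernel of `A`.

(`B` is recorded on `V* ⊗ V* ⊗ ℝ³` by the same symmetrized formula; since the formula is
symmetric in the two `V*` factors, this map has the same image as its restriction to
symmetric 2-tensors `S²V* ⊗ ℝ³`.) -/
theorem stmt3
    (A : V4 ⊗[ℝ] (⋀[ℝ]^3 V4) →ₗ[ℝ] ⋀[ℝ]^4 V4)
    (hA : ∀ γ a b c : V4, A (γ ⊗ₜ wedge3 a b c) = wedge4 γ a b c)
    (B : (V4 ⊗[ℝ] V4) ⊗[ℝ] (Fin 3 → ℝ) →ₗ[ℝ] V4 ⊗[ℝ] (⋀[ℝ]^3 V4))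
    (hB : ∀ (u w : V4) (k : Fin 3),
      B ((u ⊗ₜ w) ⊗ₜ Pi.single k 1) = u ⊗ₜ omegaWedge k w + w ⊗ₜ omegaWedge k u) :
    LinearMap.range B = LinearMap.ker A := by
  -- Step 1 : A ∘ B = 0
  have hAB : ∀ y, A (B y) = 0 := by
    have key0 : ∀ (u w : V4), A (B ((u ⊗ₜ w) ⊗ₜ Pi.single (0 : Fin 3) 1)) = 0 := by
      intro u w
      rw [hB, map_add, omegaW0, omegaW0, tmul_add, tmul_add, map_add, map_add, hA, hA, hA, hA,
        wedge4_swap01 u w, wedge4_swap01 u w]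
      abel
    have key1 : ∀ (u w : V4), A (B ((u ⊗ₜ w) ⊗ₜ Pi.single (1 : Fin 3) 1)) = 0 := by
      intro u w
      rw [hB, map_add, omegaW1, omegaW1, tmul_add, tmul_add, map_add, map_add, hA, hA, hA, hA,
        wedge4_swap01 u w, wedge4_swap01 u w]
      abel
    have key2 : ∀ (u w : V4), A (B ((u ⊗ₜ w) ⊗ₜ Pi.single (2 : Fin 3) 1)) = 0 := by
      intro u w
      rw [hB, map_add, omegaW2, omegaW2, tmul_add, tmul_add, map_add, map_add, hA, hA, hA, hA,
        wedge4_swap01 u w, wedge4_swap01 u w]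
      abel
    have key : ∀ (u w : V4) (k : Fin 3), A (B ((u ⊗ₜ w) ⊗ₜ Pi.single k 1)) = 0 := by
      intro u w k
      fin_cases k
      · exact key0 u w
      · exact key1 u w
      · exact key2 u w
    intro y
    induction y using TensorProduct.induction_on with
    | zero => simp
    | add a b ha hb => rw [map_add, map_add, ha, hb, add_zero]
    | tmul m z =>
      induction m using TensorProduct.induction_on with
      | zero => rw [zero_tmul]; simp
      | add a b ha hb => rw [add_tmul, map_add, map_add, ha, hb, add_zero]
      | tmul u w =>
        have hz : z = ∑ k, z k • (Pi.single k 1 : Fin 3 → ℝ) := by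
          funext j; simp [Pi.single_apply, Finset.sum_apply]
        rw [hz, tmul_sum]
        rw [map_sum, map_sum]
        refine Finset.sum_eq_zero fun k _ => ?_
        rw [tmul_smul, map_smul, map_smul, key, smul_zero]
  -- the distinguished element
  set t : V4 ⊗[ℝ] (⋀[ℝ]^3 V4) := e4 0 ⊗ₜ wedge3 (e4 1) (e4 2) (e4 3) with ht_def
  set M : Submodule ℝ (V4 ⊗[ℝ] (⋀[ℝ]^3 V4)) := LinearMap.range B ⊔ (ℝ ∙ t) with hM_def
  have hBm : ∀ (u w : V4) (k : Fin 3), B ((u ⊗ₜ w) ⊗ₜ Pi.single k 1) ∈ M :=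
    fun u w k => Submodule.mem_sup_left (LinearMap.mem_range_self B _)
  have htm : t ∈ M := Submodule.mem_sup_right (Submodule.mem_span_singleton_self t)
  have half : ∀ x : V4 ⊗[ℝ] (⋀[ℝ]^3 V4), (2:ℝ) • x ∈ M → x ∈ M := by
    intro x hx
    have := M.smul_mem ((2:ℝ)⁻¹) hx
    rwa [smul_smul, inv_mul_cancel₀ (two_ne_zero), one_smul] at this
  -- the 16 basic membership facts
  have h0_012 : e4 0 ⊗ₜ[ℝ] wedge3 (e4 0) (e4 1) (e4 2) ∈ M := by
    have h : e4 0 ⊗ₜ[ℝ] wedge3 (e4 0) (e4 1) (e4 2)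
        = (1/2 : ℝ) • B ((e4 0 ⊗ₜ e4 0) ⊗ₜ Pi.single 2 1) := by
      rw [hB]; simp only [omegaW2]
      simp only [wedge3_same01, wedge3_same02, wedge3_same12, w3a10, w3a20, w3a30, w3a21, w3a31, w3a32, w3b10, w3b20, w3b30, w3b21, w3b31, w3b32, tmul_add, tmul_neg, tmul_zero, add_zero, zero_add, neg_neg]
      module
    rw [h]; exact M.smul_mem _ (hBm _ _ _)
  have h0_013 : e4 0 ⊗ₜ[ℝ] wedge3 (e4 0) (e4 1) (e4 3) ∈ M := by
    have h : e4 0 ⊗ₜ[ℝ] wedge3 (e4 0) (e4 1) (e4 3)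
        = (-(1/2) : ℝ) • B ((e4 0 ⊗ₜ e4 0) ⊗ₜ Pi.single 1 1) := by
      rw [hB]; simp only [omegaW1]
      simp only [wedge3_same01, wedge3_same02, wedge3_same12, w3a10, w3a20, w3a30, w3a21, w3a31, w3a32, w3b10, w3b20, w3b30, w3b21, w3b31, w3b32, tmul_add, tmul_neg, tmul_zero, add_zero, zero_add, neg_neg]
      module
    rw [h]; exact M.smul_mem _ (hBm _ _ _)
  have h0_023 : e4 0 ⊗ₜ[ℝ] wedge3 (e4 0) (e4 2) (e4 3) ∈ M := by
    have h : e4 0 ⊗ₜ[ℝ] wedge3 (e4 0) (e4 2) (e4 3)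
        = (1/2 : ℝ) • B ((e4 0 ⊗ₜ e4 0) ⊗ₜ Pi.single 0 1) := by
      rw [hB]; simp only [omegaW0]
      simp only [wedge3_same01, wedge3_same02, wedge3_same12, w3a10, w3a20, w3a30, w3a21, w3a31, w3a32, w3b10, w3b20, w3b30, w3b21, w3b31, w3b32, tmul_add, tmul_neg, tmul_zero, add_zero, zero_add, neg_neg]
      module
    rw [h]; exact M.smul_mem _ (hBm _ _ _)
  have h1_012 : e4 1 ⊗ₜ[ℝ] wedge3 (e4 0) (e4 1) (e4 2) ∈ M := by
    have h : e4 1 ⊗ₜ[ℝ] wedge3 (e4 0) (e4 1) (e4 2)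
        = (-(1/2) : ℝ) • B ((e4 1 ⊗ₜ e4 1) ⊗ₜ Pi.single 1 1) := by
      rw [hB]; simp only [omegaW1]
      simp only [wedge3_same01, wedge3_same02, wedge3_same12, w3a10, w3a20, w3a30, w3a21, w3a31, w3a32, w3b10, w3b20, w3b30, w3b21, w3b31, w3b32, tmul_add, tmul_neg, tmul_zero, add_zero, zero_add, neg_neg]
      module
    rw [h]; exact M.smul_mem _ (hBm _ _ _)
  have h1_013 : e4 1 ⊗ₜ[ℝ] wedge3 (e4 0) (e4 1) (e4 3) ∈ M := by
    have h : e4 1 ⊗ₜ[ℝ] wedge3 (e4 0) (e4 1) (e4 3)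
        = (-(1/2) : ℝ) • B ((e4 1 ⊗ₜ e4 1) ⊗ₜ Pi.single 2 1) := by
      rw [hB]; simp only [omegaW2]
      simp only [wedge3_same01, wedge3_same02, wedge3_same12, w3a10, w3a20, w3a30, w3a21, w3a31, w3a32, w3b10, w3b20, w3b30, w3b21, w3b31, w3b32, tmul_add, tmul_neg, tmul_zero, add_zero, zero_add, neg_neg]
      module
    rw [h]; exact M.smul_mem _ (hBm _ _ _)
  have h1_123 : e4 1 ⊗ₜ[ℝ] wedge3 (e4 1) (e4 2) (e4 3) ∈ M := by
    have h : e4 1 ⊗ₜ[ℝ] wedge3 (e4 1) (e4 2) (e4 3)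
        = (1/2 : ℝ) • B ((e4 1 ⊗ₜ e4 1) ⊗ₜ Pi.single 0 1) := by
      rw [hB]; simp only [omegaW0]
      simp only [wedge3_same01, wedge3_same02, wedge3_same12, w3a10, w3a20, w3a30, w3a21, w3a31, w3a32, w3b10, w3b20, w3b30, w3b21, w3b31, w3b32, tmul_add, tmul_neg, tmul_zero, add_zero, zero_add, neg_neg]
      module
    rw [h]; exact M.smul_mem _ (hBm _ _ _)
  have h2_012 : e4 2 ⊗ₜ[ℝ] wedge3 (e4 0) (e4 1) (e4 2) ∈ M := by
    have h : e4 2 ⊗ₜ[ℝ] wedge3 (e4 0) (e4 1) (e4 2)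
        = (1/2 : ℝ) • B ((e4 2 ⊗ₜ e4 2) ⊗ₜ Pi.single 0 1) := by
      rw [hB]; simp only [omegaW0]
      simp only [wedge3_same01, wedge3_same02, wedge3_same12, w3a10, w3a20, w3a30, w3a21, w3a31, w3a32, w3b10, w3b20, w3b30, w3b21, w3b31, w3b32, tmul_add, tmul_neg, tmul_zero, add_zero, zero_add, neg_neg]
      module
    rw [h]; exact M.smul_mem _ (hBm _ _ _)
  have h2_023 : e4 2 ⊗ₜ[ℝ] wedge3 (e4 0) (e4 2) (e4 3) ∈ M := by
    have h : e4 2 ⊗ₜ[ℝ] wedge3 (e4 0) (e4 2) (e4 3)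
        = (-(1/2) : ℝ) • B ((e4 2 ⊗ₜ e4 2) ⊗ₜ Pi.single 2 1) := by
      rw [hB]; simp only [omegaW2]
      simp only [wedge3_same01, wedge3_same02, wedge3_same12, w3a10, w3a20, w3a30, w3a21, w3a31, w3a32, w3b10, w3b20, w3b30, w3b21, w3b31, w3b32, tmul_add, tmul_neg, tmul_zero, add_zero, zero_add, neg_neg]
      module
    rw [h]; exact M.smul_mem _ (hBm _ _ _)
  have h2_123 : e4 2 ⊗ₜ[ℝ] wedge3 (e4 1) (e4 2) (e4 3) ∈ M := by
    have h : e4 2 ⊗ₜ[ℝ] wedge3 (e4 1) (e4 2) (e4 3)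
        = (1/2 : ℝ) • B ((e4 2 ⊗ₜ e4 2) ⊗ₜ Pi.single 1 1) := by
      rw [hB]; simp only [omegaW1]
      simp only [wedge3_same01, wedge3_same02, wedge3_same12, w3a10, w3a20, w3a30, w3a21, w3a31, w3a32, w3b10, w3b20, w3b30, w3b21, w3b31, w3b32, tmul_add, tmul_neg, tmul_zero, add_zero, zero_add, neg_neg]
      module
    rw [h]; exact M.smul_mem _ (hBm _ _ _)
  have h3_013 : e4 3 ⊗ₜ[ℝ] wedge3 (e4 0) (e4 1) (e4 3) ∈ M := by
    have h : e4 3 ⊗ₜ[ℝ] wedge3 (e4 0) (e4 1) (e4 3)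
        = (1/2 : ℝ) • B ((e4 3 ⊗ₜ e4 3) ⊗ₜ Pi.single 0 1) := by
      rw [hB]; simp only [omegaW0]
      simp only [wedge3_same01, wedge3_same02, wedge3_same12, w3a10, w3a20, w3a30, w3a21, w3a31, w3a32, w3b10, w3b20, w3b30, w3b21, w3b31, w3b32, tmul_add, tmul_neg, tmul_zero, add_zero, zero_add, neg_neg]
      module
    rw [h]; exact M.smul_mem _ (hBm _ _ _)
  have h3_023 : e4 3 ⊗ₜ[ℝ] wedge3 (e4 0) (e4 2) (e4 3) ∈ M := by
    have h : e4 3 ⊗ₜ[ℝ] wedge3 (e4 0) (e4 2) (e4 3)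
        = (1/2 : ℝ) • B ((e4 3 ⊗ₜ e4 3) ⊗ₜ Pi.single 1 1) := by
      rw [hB]; simp only [omegaW1]
      simp only [wedge3_same01, wedge3_same02, wedge3_same12, w3a10, w3a20, w3a30, w3a21, w3a31, w3a32, w3b10, w3b20, w3b30, w3b21, w3b31, w3b32, tmul_add, tmul_neg, tmul_zero, add_zero, zero_add, neg_neg]
      module
    rw [h]; exact M.smul_mem _ (hBm _ _ _)
  have h3_123 : e4 3 ⊗ₜ[ℝ] wedge3 (e4 1) (e4 2) (e4 3) ∈ M := by
    have h : e4 3 ⊗ₜ[ℝ] wedge3 (e4 1) (e4 2) (e4 3)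
        = (1/2 : ℝ) • B ((e4 3 ⊗ₜ e4 3) ⊗ₜ Pi.single 2 1) := by
      rw [hB]; simp only [omegaW2]
      simp only [wedge3_same01, wedge3_same02, wedge3_same12, w3a10, w3a20, w3a30, w3a21, w3a31, w3a32, w3b10, w3b20, w3b30, w3b21, w3b31, w3b32, tmul_add, tmul_neg, tmul_zero, add_zero, zero_add, neg_neg]
      module
    rw [h]; exact M.smul_mem _ (hBm _ _ _)
  have h0_123 : e4 0 ⊗ₜ[ℝ] wedge3 (e4 1) (e4 2) (e4 3) ∈ M := htm
  have h1_023 : e4 1 ⊗ₜ[ℝ] wedge3 (e4 0) (e4 2) (e4 3) ∈ M := by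
    have h : e4 1 ⊗ₜ[ℝ] wedge3 (e4 0) (e4 2) (e4 3)
        = (1 : ℝ) • B ((e4 0 ⊗ₜ e4 1) ⊗ₜ Pi.single 0 1) + (-1 : ℝ) • t := by
      rw [hB]; simp only [omegaW0]; rw [ht_def]
      simp only [wedge3_same01, wedge3_same02, wedge3_same12, w3a10, w3a20, w3a30, w3a21, w3a31, w3a32, w3b10, w3b20, w3b30, w3b21, w3b31, w3b32, tmul_add, tmul_neg, tmul_zero, add_zero, zero_add, neg_neg]
      module
    rw [h]; exact M.add_mem (M.smul_mem _ (hBm _ _ _)) (M.smul_mem _ htm)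
  have h2_013 : e4 2 ⊗ₜ[ℝ] wedge3 (e4 0) (e4 1) (e4 3) ∈ M := by
    have h : e4 2 ⊗ₜ[ℝ] wedge3 (e4 0) (e4 1) (e4 3)
        = (-1 : ℝ) • B ((e4 0 ⊗ₜ e4 2) ⊗ₜ Pi.single 1 1) + (1 : ℝ) • t := by
      rw [hB]; simp only [omegaW1]; rw [ht_def]
      simp only [wedge3_same01, wedge3_same02, wedge3_same12, w3a10, w3a20, w3a30, w3a21, w3a31, w3a32, w3b10, w3b20, w3b30, w3b21, w3b31, w3b32, tmul_add, tmul_neg, tmul_zero, add_zero, zero_add, neg_neg]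
      module
    rw [h]; exact M.add_mem (M.smul_mem _ (hBm _ _ _)) (M.smul_mem _ htm)
  have h3_012 : e4 3 ⊗ₜ[ℝ] wedge3 (e4 0) (e4 1) (e4 2) ∈ M := by
    have h : e4 3 ⊗ₜ[ℝ] wedge3 (e4 0) (e4 1) (e4 2)
        = (1 : ℝ) • B ((e4 0 ⊗ₜ e4 3) ⊗ₜ Pi.single 2 1) + (-1 : ℝ) • t := by
      rw [hB]; simp only [omegaW2]; rw [ht_def]
      simp only [wedge3_same01, wedge3_same02, wedge3_same12, w3a10, w3a20, w3a30, w3a21, w3a31, w3a32, w3b10, w3b20, w3b30, w3b21, w3b31, w3b32, tmul_add, tmul_neg, tmul_zero, add_zero, zero_add, neg_neg]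
      module
    rw [h]; exact M.add_mem (M.smul_mem _ (hBm _ _ _)) (M.smul_mem _ htm)
  -- helper closure properties
  have negM : ∀ x : V4 ⊗[ℝ] (⋀[ℝ]^3 V4), x ∈ M → -x ∈ M := fun x hx => by
    rw [show -x = (-1 : ℝ) • x by module]
    exact M.smul_mem _ hx
  have swA : ∀ (i : Fin 4) (a b c : V4),
      e4 i ⊗ₜ[ℝ] wedge3 a b c ∈ M → e4 i ⊗ₜ[ℝ] wedge3 b a c ∈ M := by
    intro i a b c h
    rw [wedge3_swap01, tmul_neg]
    exact negM _ h
  have swB : ∀ (i : Fin 4) (a b c : V4),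
      e4 i ⊗ₜ[ℝ] wedge3 a b c ∈ M → e4 i ⊗ₜ[ℝ] wedge3 a c b ∈ M := by
    intro i a b c h
    rw [wedge3_swap12, tmul_neg]
    exact negM _ h
  have z01 : ∀ (i : Fin 4) (a c : V4), e4 i ⊗ₜ[ℝ] wedge3 a a c ∈ M := by
    intro i a c; rw [wedge3_same01, tmul_zero]; exact M.zero_mem
  have z02 : ∀ (i : Fin 4) (a b : V4), e4 i ⊗ₜ[ℝ] wedge3 a b a ∈ M := by
    intro i a b; rw [wedge3_same02, tmul_zero]; exact M.zero_mem
  have z12 : ∀ (i : Fin 4) (a b : V4), e4 i ⊗ₜ[ℝ] wedge3 a b b ∈ M := by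
    intro i a b; rw [wedge3_same12, tmul_zero]; exact M.zero_mem
  have hw012 : ∀ i : Fin 4, e4 i ⊗ₜ[ℝ] wedge3 (e4 0) (e4 1) (e4 2) ∈ M := by
    intro i
    fin_cases i
    · exact h0_012
    · exact h1_012
    · exact h2_012
    · exact h3_012
  have hw013 : ∀ i : Fin 4, e4 i ⊗ₜ[ℝ] wedge3 (e4 0) (e4 1) (e4 3) ∈ M := by
    intro i
    fin_cases i
    · exact h0_013
    · exact h1_013
    · exact h2_013
    · exact h3_013
  have hw023 : ∀ i : Fin 4, e4 i ⊗ₜ[ℝ] wedge3 (e4 0) (e4 2) (e4 3) ∈ M := by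
    intro i
    fin_cases i
    · exact h0_023
    · exact h1_023
    · exact h2_023
    · exact h3_023
  have hw123 : ∀ i : Fin 4, e4 i ⊗ₜ[ℝ] wedge3 (e4 1) (e4 2) (e4 3) ∈ M := by
    intro i
    fin_cases i
    · exact h0_123
    · exact h1_123
    · exact h2_123
    · exact h3_123
  -- all basis tensors lie in M
  have base : ∀ i j k l : Fin 4, e4 i ⊗ₜ[ℝ] wedge3 (e4 j) (e4 k) (e4 l) ∈ M := by
    intro i j k l
    fin_cases j <;> fin_cases k <;> fin_cases l
    · exact z01 i _ _
    · exact z01 i _ _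
    · exact z01 i _ _
    · exact z01 i _ _
    · exact z02 i _ _
    · exact z12 i _ _
    · exact hw012 i
    · exact hw013 i
    · exact z02 i _ _
    · exact (swB i _ _ _ (hw012 i))
    · exact z12 i _ _
    · exact hw023 i
    · exact z02 i _ _
    · exact (swB i _ _ _ (hw013 i))
    · exact (swB i _ _ _ (hw023 i))
    · exact z12 i _ _
    · exact z12 i _ _
    · exact z02 i _ _
    · exact (swA i _ _ _ (hw012 i))
    · exact (swA i _ _ _ (hw013 i))
    · exact z01 i _ _
    · exact z01 i _ _
    · exact z01 i _ _
    · exact z01 i _ _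
    · exact (swB i _ _ _ (swA i _ _ _ (hw012 i)))
    · exact z02 i _ _
    · exact z12 i _ _
    · exact hw123 i
    · exact (swB i _ _ _ (swA i _ _ _ (hw013 i)))
    · exact z02 i _ _
    · exact (swB i _ _ _ (hw123 i))
    · exact z12 i _ _
    · exact z12 i _ _
    · exact (swA i _ _ _ (swB i _ _ _ (hw012 i)))
    · exact z02 i _ _
    · exact (swA i _ _ _ (hw023 i))
    · exact (swA i _ _ _ (swB i _ _ _ (swA i _ _ _ (hw012 i))))
    · exact z12 i _ _
    · exact z02 i _ _
    · exact (swA i _ _ _ (hw123 i))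
    · exact z01 i _ _
    · exact z01 i _ _
    · exact z01 i _ _
    · exact z01 i _ _
    · exact (swB i _ _ _ (swA i _ _ _ (hw023 i)))
    · exact (swB i _ _ _ (swA i _ _ _ (hw123 i)))
    · exact z02 i _ _
    · exact z12 i _ _
    · exact z12 i _ _
    · exact (swA i _ _ _ (swB i _ _ _ (hw013 i)))
    · exact (swA i _ _ _ (swB i _ _ _ (hw023 i)))
    · exact z02 i _ _
    · exact (swA i _ _ _ (swB i _ _ _ (swA i _ _ _ (hw013 i))))
    · exact z12 i _ _
    · exact (swA i _ _ _ (swB i _ _ _ (hw123 i)))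
    · exact z02 i _ _
    · exact (swA i _ _ _ (swB i _ _ _ (swA i _ _ _ (hw023 i))))
    · exact (swA i _ _ _ (swB i _ _ _ (swA i _ _ _ (hw123 i))))
    · exact z12 i _ _
    · exact z02 i _ _
    · exact z01 i _ _
    · exact z01 i _ _
    · exact z01 i _ _
    · exact z01 i _ _
  -- M is everything
  have htop : M = ⊤ := by
    rw [eq_top_iff]
    rintro x -
    induction x using TensorProduct.induction_on with
    | zero => exact M.zero_mem
    | add a b ha hb => exact M.add_mem ha hb
    | tmul u η =>
      have hu : u ⊗ₜ[ℝ] η = ∑ i, u i • ((e4 i : V4) ⊗ₜ[ℝ] η) := by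
        conv_lhs => rw [v4_eq_sum u]
        rw [sum_tmul]
        exact Finset.sum_congr rfl fun i _ => (smul_tmul' _ _ _).symm
      rw [hu]
      refine sum_mem fun i _ => M.smul_mem _ ?_
      have hη : η ∈ Submodule.span ℝ {x : ⋀[ℝ]^3 V4 | ∃ a b c, wedge3 a b c = x} := by
        rw [wedge3_span]; trivial
      refine Submodule.span_induction ?_ ?_ ?_ ?_ hη
      · rintro x ⟨a, b, c, rfl⟩
        rw [wedge3_expand, tmul_sum]
        refine sum_mem fun r _ => ?_
        rw [tmul_smul]
        exact M.smul_mem _ (base i (r 0) (r 1) (r 2))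
      · rw [tmul_zero]; exact M.zero_mem
      · intro x y _ _ hx hy
        rw [tmul_add]; exact M.add_mem hx hy
      · intro a x _ hx
        rw [tmul_smul]; exact M.smul_mem _ hx
  -- conclude
  apply le_antisymm
  · rintro x ⟨y, rfl⟩
    exact LinearMap.mem_ker.2 (hAB y)
  · intro x hx
    have hxM : x ∈ M := htop ▸ Submodule.mem_top
    rcases Submodule.mem_sup.1 hxM with ⟨b, hb, z, hz, rfl⟩
    rcases Submodule.mem_span_singleton.1 hz with ⟨c, rfl⟩
    obtain ⟨y, rfl⟩ := hb
    have hA0 : A (B y + c • t) = 0 := LinearMap.mem_ker.1 hx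
    rw [map_add, hAB y, zero_add, map_smul, ht_def, hA] at hA0
    rcases smul_eq_zero.1 hA0 with hc | hw
    · rw [hc, zero_smul, add_zero]
      exact LinearMap.mem_range_self B y
    · exact absurd hw wedge4_ne
end

section
/- For a > 0, let f_a(r) = √(r⁴+a²) − a·log((√(r⁴+a²)+a)/r²) for r > 0, and set G_a(r) = f_a(r) − r². Then lim_{r→∞} r² · G_a(r) = −a²/2. In particular G_a(r) = O(r^{-2}) as r → ∞. -/
open Filter Asymptotics

/-- The Eguchi–Hanson Kähler potential `f_a(r) = √(r⁴+a²) − a·log((√(r⁴+a²)+a)/r²)`. -/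
noncomputable def fEH (a r : ℝ) : ℝ :=
  Real.sqrt (r ^ 4 + a ^ 2) - a * Real.log ((Real.sqrt (r ^ 4 + a ^ 2) + a) / r ^ 2)

/-!
In the variable `t = r²` one has `f_a = √(t²+a²) − a·log ρ` with `ρ = (√(t²+a²)+a)/t`.
Rationalising gives `t(√(t²+a²) − t) = a²/(√(1+(a/t)²) + 1) → a²/2`, hence
`t(ρ − 1) = √(t²+a²) − t + a → a`, and since `log ρ = (ρ − 1) + o(ρ − 1)` as `ρ → 1`,
also `t·log ρ → a`. Therefore `t(f_a − t) → a²/2 − a·a = −a²/2`.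
-/

section

variable {α : Type*} {l : Filter α}

theorem tendsto_zero_of_tendsto_mul_of_tendsto_atTop {c f : α → ℝ} {L : ℝ}
    (hc : Tendsto c l atTop) (h : Tendsto (fun x => c x * f x) l (nhds L)) :
    Tendsto f l (nhds 0) := by
  refine (h.div_atTop hc).congr' ?_
  filter_upwards [hc.eventually_ne_atTop 0] with x hx
  exact mul_div_cancel_left₀ _ hx

theorem Filter.Tendsto.mul_log_of_mul_sub_one {c ρ : α → ℝ} {L : ℝ}
    (hρ : Tendsto ρ l (nhds 1)) (h : Tendsto (fun x => c x * (ρ x - 1)) l (nhds L)) :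
    Tendsto (fun x => c x * Real.log (ρ x)) l (nhds L) := by
  have hlog : (fun y => Real.log y - (y - 1)) =o[nhds 1] fun y => y - 1 := by
    simpa using (Real.hasDerivAt_log one_ne_zero).isLittleO
  have herr : (fun x => c x * (Real.log (ρ x) - (ρ x - 1))) =o[l]
      fun x => c x * (ρ x - 1) :=
    (isBigO_refl c l).mul_isLittleO (hlog.comp_tendsto hρ)
  have herr_zero : Tendsto (fun x => c x * (Real.log (ρ x) - (ρ x - 1))) l (nhds 0) := by
    simpa using (herr.trans_isBigO (h.isBigO_one ℝ)).tendsto_div_nhds_zero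
  convert herr_zero.add h using 2 with x
  · ring
  · rw [zero_add]

end

theorem tendsto_mul_sqrt_sq_add_sq_sub (a : ℝ) :
    Tendsto (fun t : ℝ => t * (Real.sqrt (t ^ 2 + a ^ 2) - t)) atTop (nhds (a ^ 2 / 2)) := by
  have hsqrt : Tendsto (fun t : ℝ => Real.sqrt (1 + (a / t) ^ 2)) atTop (nhds 1) := by
    simpa using ((tendsto_const_nhds.div_atTop tendsto_id).pow 2).const_add 1 |>.sqrt
  have hlim : Tendsto (fun t : ℝ => a ^ 2 / (Real.sqrt (1 + (a / t) ^ 2) + 1)) atTop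
      (nhds (a ^ 2 / 2)) := by
    have := (tendsto_const_nhds (x := a ^ 2)).div (hsqrt.add_const 1) (by norm_num)
    rwa [one_add_one_eq_two] at this
  refine hlim.congr' ?_
  filter_upwards [eventually_gt_atTop 0] with t ht
  set s := Real.sqrt (1 + (a / t) ^ 2) with hs
  have hs_sq : s ^ 2 = 1 + (a / t) ^ 2 := Real.sq_sqrt (by positivity)
  have hs_pos : 0 < s + 1 := by positivity
  have hscale : Real.sqrt (t ^ 2 + a ^ 2) = t * s := by
    rw [hs, ← Real.sqrt_sq ht.le, ← Real.sqrt_mul (sq_nonneg t), Real.sqrt_sq ht.le]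
    congr 1
    field_simp
  rw [hscale, div_eq_iff hs_pos.ne']
  field_simp at hs_sq ⊢
  linear_combination -hs_sq

theorem tendsto_mul_sqrt_sq_add_sq_sub_mul_log_sub (a : ℝ) :
    Tendsto (fun t : ℝ => t * (Real.sqrt (t ^ 2 + a ^ 2)
      - a * Real.log ((Real.sqrt (t ^ 2 + a ^ 2) + a) / t) - t)) atTop (nhds (-(a ^ 2) / 2)) := by
  have hsqrt := tendsto_mul_sqrt_sq_add_sq_sub a
  have hρ_sub : Tendsto (fun t : ℝ => t * ((Real.sqrt (t ^ 2 + a ^ 2) + a) / t - 1)) atTop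
      (nhds a) := by
    have := (tendsto_zero_of_tendsto_mul_of_tendsto_atTop tendsto_id hsqrt).add_const a
    rw [zero_add] at this
    refine this.congr' ?_
    filter_upwards [eventually_ne_atTop 0] with t ht
    field_simp
    ring
  have hρ : Tendsto (fun t : ℝ => (Real.sqrt (t ^ 2 + a ^ 2) + a) / t) atTop (nhds 1) := by
    simpa using (tendsto_zero_of_tendsto_mul_of_tendsto_atTop tendsto_id hρ_sub).add_const 1
  have hlog := hρ.mul_log_of_mul_sub_one hρ_sub
  rw [show -(a ^ 2) / 2 = a ^ 2 / 2 - a * a by ring]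
  exact (hsqrt.sub (hlog.const_mul a)).congr fun t => by ring

theorem stmt7_general (a : ℝ) :
    Tendsto (fun r : ℝ => r ^ 2 * (fEH a r - r ^ 2)) atTop (nhds (-(a ^ 2) / 2)) ∧
    (fun r : ℝ => fEH a r - r ^ 2) =O[atTop] fun r : ℝ => (r ^ 2)⁻¹ := by
  have hlim : Tendsto (fun r : ℝ => r ^ 2 * (fEH a r - r ^ 2)) atTop (nhds (-(a ^ 2) / 2)) := by
    refine ((tendsto_mul_sqrt_sq_add_sq_sub_mul_log_sub a).comp (tendsto_pow_atTop two_ne_zero)).congr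
      fun r => ?_
    simp only [Function.comp_apply, fEH, ← pow_mul]
  refine ⟨hlim, isBigO_of_div_tendsto_nhds ?_ _ (hlim.congr fun r => ?_)⟩
  · filter_upwards [eventually_ne_atTop 0] with r hr hr_inv
    exact absurd hr_inv (by positivity)
  · simp only [Pi.div_apply, div_inv_eq_mul, mul_comm]

/-- With `G_a(r) = f_a(r) − r²`, one has `lim_{r→∞} r²·G_a(r) = −a²/2`;
in particular `G_a(r) = O(r^{-2})` as `r → ∞`. -/
theorem stmt7 (a : ℝ) (ha : 0 < a) :
    Tendsto (fun r : ℝ => r ^ 2 * (fEH a r - r ^ 2)) atTop (nhds (-(a ^ 2) / 2)) ∧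
    (fun r : ℝ => fEH a r - r ^ 2) =O[atTop] fun r : ℝ => (r ^ 2)⁻¹ :=
  stmt7_general a
end
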